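/- arXiv:1705.10089 — 11 statements merged into one kernel-verified Lean document; each statement's English description precedes it below -/
import Mathlib

section
/- Let R be a semiring and e an idempotent element of R. Then the halo of {e} in R equals the set of all x in R such that there exists y in R with yx = e and xyx = x. -/
def halo (R : Type*) {V : Type*} [Semiring R] [AddCommMonoid V] [Module R V]
    (S : Set V) : Set V :=
  {v | ∃ l m : R, l • v ∈ S ∧ m • (l • v) = v}

theorem halo_idempotent {R : Type*} [Semiring R] (e : R) (he : IsIdempotentElem e) :
    halo R ({e} : Set R) = {x : R | ∃ y : R, y * x = e ∧ x * y * x = x} := by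
  ext x
  simp only [halo, Set.mem_setOf_eq, Set.mem_singleton_iff, smul_eq_mul]
  constructor
  · rintro ⟨l, m, hl, hm⟩
    refine ⟨l, hl, ?_⟩
    rw [mul_assoc, hl]
    have hx : x = m * e := by rw [← hl]; exact hm.symm
    rw [hx, mul_assoc, he]
  · rintro ⟨y, hy, hxy⟩
    exact ⟨y, x, hy, by rw [← mul_assoc, hxy]⟩
end

section
/- Let R be a semiring and let Id(R) denote the set of all idempotents of R. Then the halo of Id(R) in R equals the set of von Neumann regular elements: { x in R | there exists y in R with xyx = x }. -/
theorem halo_idempotents {R : Type*} [Semiring R] :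
    halo R {e : R | IsIdempotentElem e} = {x : R | ∃ y : R, x * y * x = x} := by
  ext x
  simp only [halo, Set.mem_setOf_eq, smul_eq_mul]
  constructor
  · rintro ⟨l, m, he, hm⟩
    refine ⟨l, ?_⟩
    calc x * l * x = m * (l * x) * l * x := by rw [hm]
      _ = m * (l * x * (l * x)) := by simp [mul_assoc]
      _ = m * (l * x) := by rw [he]
      _ = x := hm
  · rintro ⟨y, h⟩
    refine ⟨y, x, ?_, ?_⟩
    · show y * x * (y * x) = y * x
      calc y * x * (y * x) = y * (x * y * x) := by simp [mul_assoc]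
        _ = y * x := by rw [h]
    · calc x * (y * x) = x * y * x := by simp [mul_assoc]
        _ = x := h
end

section
/- Let R be a semiring, V an R-module generated by a set S (every element of V is a finite R-linear combination of elements of S), and M an additive spine of R. Then every summand absorbing submodule W of V is generated as an R-module by the set W ∩ (MS), where MS = { m·s | m in M, s in S }. -/
def IsAdditiveSpine (R : Type*) {V : Type*} [Semiring R] [AddCommMonoid V] [Module R V]
    (S : Set V) : Prop :=
  AddSubmonoid.closure (halo R S) = ⊤

def IsSA {R V : Type*} [Semiring R] [AddCommMonoid V] [Module R V]
    (W : Submodule R V) : Prop :=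
  ∀ x y : V, x + y ∈ W → x ∈ W ∧ y ∈ W

/-!
Let `T = W ∩ MS`. Because `W` is summand absorbing, the elements `v` with `v ∈ W → v ∈ span T`
are closed under addition, so it suffices to check this implication on additive generators of `V`,
namely the products `r • s` with `s ∈ S`. Writing `r` as a sum of elements of the halo of `M`
reduces further to `r = a` in the halo: there `l a ∈ M` and `m (l a) = a` for some `l, m`, so
`(l a) • s = l • (a • s)` lies in `T` and `a • s = m • ((l a) • s)` lies in `span T`.
-/

section

variable {R V : Type*} [Semiring R] [AddCommMonoid V] [Module R V] {W : Submodule R V}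

theorem IsSA.mem_of_mem_closure (hW : IsSA W) (N : AddSubmonoid V) {s : Set V}
    (hs : ∀ x ∈ s, x ∈ W → x ∈ N) {v : V} (hv : v ∈ AddSubmonoid.closure s) :
    v ∈ W → v ∈ N := by
  induction hv using AddSubmonoid.closure_induction with
  | mem x hx => exact hs x hx
  | zero => exact fun _ => N.zero_mem
  | add x y _ _ ihx ihy =>
    intro hxy
    obtain ⟨hx, hy⟩ := hW x y hxy
    exact N.add_mem (ihx hx) (ihy hy)

theorem smul_mem_span_of_mem_halo {M : Set R} {S : Set V} {a : R} (ha : a ∈ halo R M)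
    {x : V} (hx : x ∈ S) (haW : a • x ∈ W) :
    a • x ∈ Submodule.span R ((W : Set V) ∩ Set.image2 (· • ·) M S) := by
  obtain ⟨l, m, hlM, hml⟩ := ha
  have hlT : (l • a) • x ∈ (W : Set V) ∩ Set.image2 (· • ·) M S :=
    ⟨by rw [smul_assoc]; exact W.smul_mem l haW, Set.mem_image2_of_mem hlM hx⟩
  rw [← hml, smul_assoc]
  exact Submodule.smul_mem _ m (Submodule.subset_span hlT)

theorem IsSA.smul_mem_span_of_isAdditiveSpine (hW : IsSA W) {M : Set R}
    (hM : IsAdditiveSpine R M) {S : Set V} {x : V} (hx : x ∈ S) (r : R) :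
    r • x ∈ W → r • x ∈ Submodule.span R ((W : Set V) ∩ Set.image2 (· • ·) M S) := by
  have hr : r • x ∈ AddSubmonoid.closure ((smulAddHom R V).flip x '' halo R M) := by
    rw [← AddMonoidHom.map_mclosure, hM]
    exact ⟨r, trivial, rfl⟩
  refine hW.mem_of_mem_closure (Submodule.span R _).toAddSubmonoid ?_ hr
  rintro _ ⟨a, ha, rfl⟩
  exact smul_mem_span_of_mem_halo ha hx

theorem IsSA.le_of_forall_smul_mem (hW : IsSA W) {S : Set V} (hS : Submodule.span R S = ⊤)
    (N : Submodule R V) (h : ∀ r : R, ∀ x ∈ S, r • x ∈ W → r • x ∈ N) : W ≤ N := by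
  intro v hv
  have hv_closure : v ∈ (Submodule.span R S).toAddSubmonoid := by
    rw [hS]
    trivial
  rw [Submodule.span_eq_closure] at hv_closure
  refine hW.mem_of_mem_closure N.toAddSubmonoid ?_ hv_closure hv
  rintro _ ⟨r, -, x, hx, rfl⟩
  exact h r x hx

end

theorem sa_generated_by_spine_product {R V : Type*} [Semiring R] [AddCommMonoid V]
    [Module R V] (S : Set V) (hS : Submodule.span R S = ⊤)
    (M : Set R) (hM : IsAdditiveSpine R M)
    (W : Submodule R V) (hW : IsSA W) :
    W = Submodule.span R ((W : Set V) ∩ Set.image2 (· • ·) M S) :=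
  le_antisymm
    (hW.le_of_forall_smul_mem hS _ fun r _ hx => hW.smul_mem_span_of_isAdditiveSpine hM hx r)
    (Submodule.span_le.mpr Set.inter_subset_left)
end

section
/- Let R be a semiring that is additively generated by its set of left invertible elements. Then for any R-module V and any generating set S of V, every summand absorbing submodule W of V is generated by W ∩ S. -/
/-!
Write `A` for the monoid of left invertible elements of `R`. Since `R` is additively generated by
`A`, every vector is a finite sum of vectors `a • s` with `a ∈ A` and `s ∈ S`. If such a sum lies
in the summand absorbing submodule `W`, then so does each summand `a • s`, hence so does
`s = b • (a • s)` where `b * a = 1`; so every element of `W` is a combination of elements of `W ∩ S`.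
-/

section

open scoped Pointwise

variable {R V : Type*} [Semiring R] [AddCommMonoid V] [Module R V]

variable (R) in
def leftInvertibles : Submonoid R where
  carrier := {x | ∃ y : R, y * x = 1}
  one_mem' := ⟨1, one_mul 1⟩
  mul_mem' := by
    rintro a b ⟨y, hy⟩ ⟨z, hz⟩
    exact ⟨z * y, by rw [mul_assoc, ← mul_assoc y, hy, one_mul, hz]⟩

theorem Submodule.span_eq_closure_submonoid_smul {M : Submonoid R}
    (hM : AddSubmonoid.closure (M : Set R) = ⊤) (S : Set V) :
    (Submodule.span R S).toAddSubmonoid = AddSubmonoid.closure ((M : Set R) • S) := by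
  refine le_antisymm (fun v hv => ?_) (AddSubmonoid.closure_le.2 ?_)
  · induction hv using Submodule.closure_induction with
    | zero => exact zero_mem _
    | add _ _ _ _ hx hy => exact add_mem hx hy
    | smul_mem r s hs =>
      have hr : r ∈ AddSubmonoid.closure (M : Set R) := hM ▸ AddSubmonoid.mem_top r
      induction hr using AddSubmonoid.closure_induction with
      | mem m hm => exact AddSubmonoid.subset_closure (Set.smul_mem_smul hm hs)
      | zero => simpa only [zero_smul] using zero_mem _
      | add _ _ _ _ ha hb => simpa only [add_smul] using add_mem ha hb
  · rintro _ ⟨m, -, s, hs, rfl⟩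
    exact Submodule.smul_mem _ m (Submodule.subset_span hs)

theorem AddSubmonoid.closure_inf_le_closure_inter {M : Type*} [AddMonoid M] {W : AddSubmonoid M}
    (hW : ∀ x y : M, x + y ∈ W → x ∈ W ∧ y ∈ W) (U : Set M) :
    AddSubmonoid.closure U ⊓ W ≤ AddSubmonoid.closure (U ∩ W) := by
  rintro x ⟨hxU, hxW⟩
  induction hxU using AddSubmonoid.closure_induction with
  | mem u hu => exact AddSubmonoid.subset_closure ⟨hu, hxW⟩
  | zero => exact zero_mem _
  | add x y _ _ hx hy =>
    obtain ⟨hxW, hyW⟩ := hW x y hxW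
    exact add_mem (hx hxW) (hy hyW)

theorem Submodule.mem_of_smul_mem_of_mul_eq_one (W : Submodule R V) {a b : R} (hba : b * a = 1)
    {v : V} (hv : a • v ∈ W) : v ∈ W := by
  simpa only [smul_smul, hba, one_smul] using W.smul_mem b hv

end

theorem sa_generated_by_intersection {R : Type*} [Semiring R]
    (hR : AddSubmonoid.closure {x : R | ∃ y : R, y * x = 1} = ⊤)
    {V : Type*} [AddCommMonoid V] [Module R V]
    (S : Set V) (hS : Submodule.span R S = ⊤)
    (W : Submodule R V) (hW : IsSA W) :
    W = Submodule.span R ((W : Set V) ∩ S) := by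
  refine le_antisymm (fun w hw => ?_) (Submodule.span_le.2 Set.inter_subset_left)
  have hw_closure := (Submodule.span_eq_closure_submonoid_smul (M := leftInvertibles R) hR S).le
    (by simp [hS] : w ∈ Submodule.span R S)
  have hw_inter := AddSubmonoid.closure_inf_le_closure_inter (W := W.toAddSubmonoid) hW _
    ⟨hw_closure, hw⟩
  refine AddSubmonoid.closure_le.2 ?_ hw_inter
  rintro _ ⟨⟨a, ⟨b, hba⟩, s, hs, rfl⟩, hasW⟩
  exact Submodule.smul_mem _ a
    (Submodule.subset_span ⟨W.mem_of_smul_mem_of_mul_eq_one hba hasW, hs⟩)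
end

section
/- Let C be a semiring such that the unique homomorphism from the natural numbers to C is surjective, and let R = M_n(C) be the semiring of n×n matrices over C. Then the set D = { e_{11}, ..., e_{nn} } of diagonal matrix units is an additive spine of R. -/
/-! Every matrix unit `e_ij` lies in the halo of the diagonal units, with witnesses `y = e_ji`,
`z = e_ij`: `e_ji e_ij = e_jj` and `e_ij e_jj = e_ij`. Over a semiring generated additively by `1`,
the matrix units generate all matrices additively. -/

theorem isAdditiveSpine_of_closure_subset_halo {R V : Type*} [Semiring R] [AddCommMonoid V]
    [Module R V] {S T : Set V} (hT : AddSubmonoid.closure T = ⊤) (hTS : T ⊆ halo R S) :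
    IsAdditiveSpine R S :=
  top_unique (hT ▸ AddSubmonoid.closure_mono hTS)

namespace Matrix

variable {ι α : Type*} [DecidableEq ι]

theorem single_one_mem_halo_range_single_diag [Fintype ι] [Semiring α] (i j : ι) :
    single i j (1 : α) ∈ halo (Matrix ι ι α) (Set.range fun k : ι => single k k (1 : α)) := by
  refine ⟨single j i 1, single i j 1, ⟨j, ?_⟩, ?_⟩ <;>
    simp only [smul_eq_mul, single_mul_single_same, one_mul]

theorem addSubmonoid_closure_range_single_one_eq_top [Fintype ι] [AddCommMonoidWithOne α]
    (hα : Function.Surjective (Nat.cast : ℕ → α)) :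
    AddSubmonoid.closure (Set.range fun p : ι × ι => single p.1 p.2 (1 : α)) = ⊤ := by
  refine eq_top_iff.2 fun M _ => ?_
  rw [matrix_eq_sum_single M]
  refine AddSubmonoid.sum_mem _ fun i _ => AddSubmonoid.sum_mem _ fun j _ => ?_
  obtain ⟨N, hN⟩ := hα (M i j)
  rw [← hN, ← nsmul_one, ← smul_single]
  exact AddSubmonoid.nsmul_mem _ (AddSubmonoid.subset_closure (Set.mem_range_self (i, j))) N

end Matrix

theorem diag_units_spine {C : Type*} [Semiring C]
    (hC : Function.Surjective (Nat.cast : ℕ → C)) (n : ℕ) :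
    IsAdditiveSpine (Matrix (Fin n) (Fin n) C)
      (Set.range fun i : Fin n => Matrix.single i i (1 : C)) := by
  refine isAdditiveSpine_of_closure_subset_halo
    (Matrix.addSubmonoid_closure_range_single_one_eq_top hC) ?_
  rintro _ ⟨⟨i, j⟩, rfl⟩
  exact Matrix.single_one_mem_halo_range_single_diag i j
end

section
/- Let R be a semiring with subsemirings R₁ and R₂ such that R is additively generated by R₁R₂ and every element of R₁ commutes with every element of R₂. If M₁ is an additive spine of R₁ and M₂ is an additive spine of R₂, then the product of the halos, hal_{R₁}(M₁)·hal_{R₂}(M₂), is contained in the halo of M₁M₂ in R, and M₁M₂ is an additive spine of R. -/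
/-- Halo of `M` relative to a subset `A` of a semiring `R`: elements `x ∈ A` such that
there are `y, z ∈ A` with `y*x ∈ M` and `z*(y*x) = x`. -/
def haloIn {R : Type*} [Semiring R] (A M : Set R) : Set R :=
  {x | x ∈ A ∧ ∃ y ∈ A, ∃ z ∈ A, y * x ∈ M ∧ z * (y * x) = x}

open Set Pointwise

/-- The halo witnesses `y₁, z₁` of `a` and `y₂, z₂` of `b` multiply to witnesses `y₁ y₂, z₁ z₂`
of `a b`; commutativity moves `y₂` past `a` and `z₂` past `y₁ a`. -/
theorem image2_mul_haloIn_subset_haloIn_univ {R : Type*} [Semiring R] {S₁ S₂ : Subsemiring R}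
    (hcomm : ∀ a ∈ S₁, ∀ b ∈ S₂, Commute a b) (M₁ M₂ : Set R) :
    image2 (· * ·) (haloIn (S₁ : Set R) M₁) (haloIn (S₂ : Set R) M₂) ⊆
      haloIn univ (image2 (· * ·) M₁ M₂) := by
  rintro _ ⟨a, ⟨ha, y₁, hy₁, z₁, -, hya, hza⟩, b, ⟨-, y₂, hy₂, z₂, hz₂, hyb, hzb⟩, rfl⟩
  have hy : y₁ * y₂ * (a * b) = y₁ * a * (y₂ * b) :=
    ((hcomm a ha y₂ hy₂).mul_mul_mul_comm y₁ b).symm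
  have hz : z₁ * z₂ * (y₁ * a * (y₂ * b)) = z₁ * (y₁ * a) * (z₂ * (y₂ * b)) :=
    ((hcomm _ (mul_mem hy₁ ha) z₂ hz₂).mul_mul_mul_comm z₁ _).symm
  exact ⟨trivial, y₁ * y₂, trivial, z₁ * z₂, trivial, hy ▸ mem_image2_of_mem hya hyb,
    by rw [hy, hz, hza, hzb]⟩

theorem AddSubmonoid.closure_image2_mul_eq_top {R : Type*} [NonUnitalNonAssocSemiring R]
    {S T H K : Set R} (hS : S ⊆ closure H) (hT : T ⊆ closure K)
    (h : closure (image2 (· * ·) S T) = ⊤) : closure (image2 (· * ·) H K) = ⊤ := by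
  rw [image2_mul, ← closure_mul_closure] at h ⊢
  exact top_unique <| h.ge.trans <| mul_le_mul (closure_le.2 hS) (closure_le.2 hT)

theorem spine_of_product_general {R : Type*} [Semiring R] (R₁ R₂ : Subsemiring R)
    (hgen : AddSubmonoid.closure (Set.image2 (· * ·) (R₁ : Set R) (R₂ : Set R)) = ⊤)
    (hcomm : ∀ a ∈ R₁, ∀ b ∈ R₂, a * b = b * a)
    (M₁ M₂ : Set R)
    (hsp₁ : (R₁ : Set R) ⊆ AddSubmonoid.closure (haloIn (R₁ : Set R) M₁))
    (hsp₂ : (R₂ : Set R) ⊆ AddSubmonoid.closure (haloIn (R₂ : Set R) M₂)) :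
    Set.image2 (· * ·) (haloIn (R₁ : Set R) M₁) (haloIn (R₂ : Set R) M₂) ⊆
      haloIn (Set.univ : Set R) (Set.image2 (· * ·) M₁ M₂) ∧
    AddSubmonoid.closure (haloIn (Set.univ : Set R) (Set.image2 (· * ·) M₁ M₂)) = ⊤ := by
  have hhalo := image2_mul_haloIn_subset_haloIn_univ hcomm M₁ M₂
  exact ⟨hhalo, top_unique <| (AddSubmonoid.closure_image2_mul_eq_top hsp₁ hsp₂ hgen).ge.trans
    (AddSubmonoid.closure_mono hhalo)⟩

theorem spine_of_product {R : Type*} [Semiring R] (R₁ R₂ : Subsemiring R)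
    (hgen : AddSubmonoid.closure (Set.image2 (· * ·) (R₁ : Set R) (R₂ : Set R)) = ⊤)
    (hcomm : ∀ a ∈ R₁, ∀ b ∈ R₂, a * b = b * a)
    (M₁ M₂ : Set R) (hM₁ : M₁ ⊆ R₁) (hM₂ : M₂ ⊆ R₂)
    (hsp₁ : (R₁ : Set R) ⊆ AddSubmonoid.closure (haloIn (R₁ : Set R) M₁))
    (hsp₂ : (R₂ : Set R) ⊆ AddSubmonoid.closure (haloIn (R₂ : Set R) M₂)) :
    Set.image2 (· * ·) (haloIn (R₁ : Set R) M₁) (haloIn (R₂ : Set R) M₂) ⊆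
      haloIn (Set.univ : Set R) (Set.image2 (· * ·) M₁ M₂) ∧
    AddSubmonoid.closure (haloIn (Set.univ : Set R) (Set.image2 (· * ·) M₁ M₂)) = ⊤ :=
  spine_of_product_general R₁ R₂ hgen hcomm M₁ M₂ hsp₁ hsp₂
end

section
/- Let A be a semiring, N an additive spine of A, and R = M_n(A) the semiring of n×n matrices over A. Then the set M = ⋃_{i=1}^n N·e_{ii} of diagonal matrices with a single entry from N is an additive spine of R. -/
theorem halo_mono (R : Type*) {V : Type*} [Semiring R] [AddCommMonoid V] [Module R V]
    {S T : Set V} (hST : S ⊆ T) : halo R S ⊆ halo R T :=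
  fun _ ⟨l, m, hl, hm⟩ => ⟨l, m, hST hl, hm⟩

namespace Matrix

variable {ι A : Type*} [Fintype ι] [DecidableEq ι] [Semiring A]

theorem single_mem_halo_image_single {N : Set A} {x : A} (hx : x ∈ halo A N) (i j : ι) :
    single i j x ∈ halo (Matrix ι ι A) (single j j '' N) := by
  obtain ⟨l, m, hl, hm⟩ := hx
  refine ⟨single j i l, single i j m, ⟨l * x, hl, ?_⟩, ?_⟩
  · rw [smul_eq_mul, single_mul_single_same]
  · simp only [smul_eq_mul, single_mul_single_same]
    exact congrArg _ hm

theorem single_mem_closure_halo {N : Set A} (hN : IsAdditiveSpine A N) (i j : ι) (a : A) :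
    single i j a ∈ AddSubmonoid.closure
      (halo (Matrix ι ι A) (⋃ k : ι, (fun b : A => single k k b) '' N)) := by
  have hmap : (AddSubmonoid.closure (halo A N)).map (singleAddMonoidHom i j) ≤
      AddSubmonoid.closure (halo (Matrix ι ι A) (⋃ k : ι, (fun b : A => single k k b) '' N)) := by
    rw [AddMonoidHom.map_mclosure]
    refine AddSubmonoid.closure_mono ?_
    rintro _ ⟨x, hx, rfl⟩
    exact halo_mono _ (Set.subset_iUnion_of_subset j subset_rfl)
      (single_mem_halo_image_single hx i j)
  exact hmap ⟨a, hN ▸ AddSubmonoid.mem_top a, rfl⟩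

end Matrix

theorem matrix_spine {A : Type*} [Semiring A] (N : Set A)
    (hN : IsAdditiveSpine A N) (n : ℕ) :
    IsAdditiveSpine (Matrix (Fin n) (Fin n) A)
      (⋃ i : Fin n, (fun a : A => Matrix.single i i a) '' N) := by
  refine (AddSubmonoid.eq_top_iff' _).2 fun X => ?_
  induction X using Matrix.induction_on' with
  | h_zero => exact zero_mem _
  | h_add _ _ hX hY => exact add_mem hX hY
  | h_std_basis i j a => exact Matrix.single_mem_closure_halo hN i j a
end

section
/- Let S be a multiplicative monoid with a monoid spine T, A a semiring with additive spine N, and R = A[S] the monoid semiring. Then N·T is an additive spine of A[S]. -/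
/-- `T` is a monoid spine of `S`. -/
def IsMonoidSpine {S : Type*} [Monoid S] (T : Set S) : Prop :=
  ∀ s : S, ∃ s₁ s₂ : S, s₁ * s ∈ T ∧ s₂ * (s₁ * s) = s

namespace MonoidAlgebra

theorem addSubmonoidClosure_single_of_closure_eq_top {R M : Type*} [Semiring R] {s : Set R}
    (hs : AddSubmonoid.closure s = ⊤) :
    AddSubmonoid.closure {x : MonoidAlgebra R M | ∃ m, ∃ r ∈ s, x = single m r} = ⊤ := by
  rw [eq_top_iff, ← addSubmonoidClosure_single, AddSubmonoid.closure_le]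
  rintro _ ⟨m, r, rfl⟩
  have hle : AddSubmonoid.closure s ≤ (AddSubmonoid.closure
      {x : MonoidAlgebra R M | ∃ m, ∃ r ∈ s, x = single m r}).comap (singleAddHom m) :=
    AddSubmonoid.closure_le.2 fun r hr => AddSubmonoid.subset_closure ⟨m, r, hr, rfl⟩
  exact hle (hs ▸ AddSubmonoid.mem_top r)

theorem single_mem_halo {A S : Type*} [Semiring A] [Monoid S] {T : Set S}
    (hT : IsMonoidSpine T) {N : Set A} {a : A} (ha : a ∈ halo A N) (s : S) :
    single s a ∈ halo (MonoidAlgebra A S)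
      {x : MonoidAlgebra A S | ∃ a ∈ N, ∃ t ∈ T, x = single t a} := by
  obtain ⟨y, z, hya, hzya⟩ := ha
  obtain ⟨s₁, s₂, hs₁, hs₂⟩ := hT s
  refine ⟨single s₁ y, single s₂ z, ⟨y • a, hya, s₁ * s, hs₁, single_mul_single ..⟩, ?_⟩
  simp only [smul_eq_mul, single_mul_single] at hzya ⊢
  rw [hs₂, hzya]

end MonoidAlgebra

theorem monoid_algebra_spine {A S : Type*} [Semiring A] [Monoid S]
    (T : Set S) (hT : IsMonoidSpine T) (N : Set A) (hN : IsAdditiveSpine A N) :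
    IsAdditiveSpine (MonoidAlgebra A S)
      {x : MonoidAlgebra A S | ∃ a ∈ N, ∃ t ∈ T, x = MonoidAlgebra.single t a} := by
  rw [IsAdditiveSpine, eq_top_iff,
    ← MonoidAlgebra.addSubmonoidClosure_single_of_closure_eq_top hN]
  refine AddSubmonoid.closure_mono ?_
  rintro _ ⟨s, a, ha, rfl⟩
  exact MonoidAlgebra.single_mem_halo hT ha s
end

section
/- Let V be an (R,T)-bimodule over semirings R and T, S a subset of V, and t a unit of T. Then the halo of S·t (in V as a left R-module) equals (halo of S)·t, and S is an additive spine of V if and only if S·t is an additive spine of V. -/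
/-- For an `(R,T)`-bimodule `V` (right `T`-action given via `Tᵐᵒᵖ`) and a unit `t` of `T`,
the halo of `S·t` equals `(halo S)·t`, and `S` is an additive spine iff `S·t` is. -/
theorem halo_smul_unit {R T V : Type*} [Semiring R] [Semiring T]
    [AddCommMonoid V] [Module R V] [Module Tᵐᵒᵖ V] [SMulCommClass R Tᵐᵒᵖ V]
    (S : Set V) (t : T) (ht : IsUnit t) :
    halo R ((fun v => MulOpposite.op t • v) '' S) =
      (fun v => MulOpposite.op t • v) '' halo R S ∧
    (IsAdditiveSpine R S ↔
      IsAdditiveSpine R ((fun v => MulOpposite.op t • v) '' S)) := by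
  obtain ⟨u, hu⟩ := ht.op
  set s : Tᵐᵒᵖ := ((u⁻¹ : Tᵐᵒᵖˣ) : Tᵐᵒᵖ) with hs_def
  have hst : ∀ v : V, s • (MulOpposite.op t • v) = v := by
    intro v
    rw [← hu, ← mul_smul, hs_def, Units.inv_mul, one_smul]
  have hts : ∀ v : V, MulOpposite.op t • (s • v) = v := by
    intro v
    rw [← hu, ← mul_smul, hs_def, Units.mul_inv, one_smul]
  have key : halo R ((fun v => MulOpposite.op t • v) '' S) =
      (fun v => MulOpposite.op t • v) '' halo R S := by
    ext v
    constructor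
    · rintro ⟨l, m, ⟨w, hw, hlw⟩, hml⟩
      simp only at hlw
      refine ⟨s • v, ⟨l, m, ?_, ?_⟩, hts v⟩
      · rw [smul_comm l s v, ← hlw, hst]; exact hw
      · rw [smul_comm l s v, smul_comm m s (l • v), hml]
    · rintro ⟨w, ⟨l, m, hl, hml⟩, rfl⟩
      refine ⟨l, m, ⟨l • w, hl, (smul_comm _ _ _).symm⟩, ?_⟩
      rw [smul_comm l (MulOpposite.op t) w, smul_comm m (MulOpposite.op t) (l • w), hml]
  refine ⟨key, ?_⟩
  -- the addequiv given by smul by op t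
  let e : V ≃+ V :=
    { toFun := fun v => MulOpposite.op t • v
      invFun := fun v => s • v
      left_inv := hst
      right_inv := hts
      map_add' := fun a b => smul_add _ a b }
  have himg : AddSubmonoid.closure ((fun v => MulOpposite.op t • v) '' halo R S)
      = (AddSubmonoid.closure (halo R S)).map e.toAddMonoidHom := by
    rw [AddMonoidHom.map_mclosure]
    rfl
  unfold IsAdditiveSpine
  rw [key, himg]
  constructor
  · intro h
    rw [h]
    ext x
    simp only [AddSubmonoid.mem_map, AddSubmonoid.mem_top, iff_true]
    exact ⟨s • x, trivial, hts x⟩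
  · intro h
    ext x
    simp only [AddSubmonoid.mem_top, iff_true]
    have hx : (MulOpposite.op t • x : V) ∈
        (AddSubmonoid.closure (halo R S)).map e.toAddMonoidHom := by
      rw [h]; trivial
    obtain ⟨y, hy, hyx⟩ := hx
    exact (e.injective hyx) ▸ hy
end

section
/- Let R be a semiring, V an R-module with an additive spine T of finite cardinality t. Then every submodule U of V that is a (possibly infinite) sum of summand absorbing submodules is generated by U ∩ T; consequently there are at most 2^t such submodules, and every strictly increasing chain U₀ ⊊ U₁ ⊊ ... ⊊ U_r of such submodules has length r ≤ t. -/
/-- `U` is a (possibly infinite) sum of SA-submodules. -/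
def IsSigmaSA {R V : Type*} [Semiring R] [AddCommMonoid V] [Module R V]
    (U : Submodule R V) : Prop :=
  ∃ s : Set (Submodule R V), (∀ W ∈ s, IsSA W) ∧ U = sSup s

/-!
Every `v ∈ V` is a sum of halo elements of the spine `T`. If `v` lies in an SA-submodule `W`,
summand absorption puts each summand `h` in `W`; writing `h = μ (λ h)` with `λ h ∈ T` shows
`h ∈ span (W ∩ T)`. Hence an SA-submodule, and so every sum of them, is spanned by its trace on
`T`. A ΣSA-submodule is thus determined by a subset of `T`, which gives the bound `2 ^ t`, and a
strict chain of them gives a strict chain of subsets of `T`, of length at most `t`.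
-/

section

variable {R V : Type*} [Semiring R] [AddCommMonoid V] [Module R V]

lemma IsSA.le_span_inter {S : Set V} (hS : IsAdditiveSpine R S) {W : Submodule R V}
    (hW : IsSA W) : W ≤ Submodule.span R ((W : Set V) ∩ S) := by
  intro v hvW
  have hv : v ∈ AddSubmonoid.closure (halo R S) := hS ▸ AddSubmonoid.mem_top v
  induction hv using AddSubmonoid.closure_induction with
  | mem x hx =>
    obtain ⟨l, m, hlS, hml⟩ := hx
    rw [← hml]
    exact Submodule.smul_mem _ m (Submodule.subset_span ⟨W.smul_mem l hvW, hlS⟩)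
  | zero => exact Submodule.zero_mem _
  | add x y _ _ ihx ihy =>
    obtain ⟨hxW, hyW⟩ := hW x y hvW
    exact Submodule.add_mem _ (ihx hxW) (ihy hyW)

lemma IsSigmaSA.eq_span_inter {S : Set V} (hS : IsAdditiveSpine R S) {U : Submodule R V}
    (hU : IsSigmaSA U) : U = Submodule.span R ((U : Set V) ∩ S) := by
  refine le_antisymm ?_ (Submodule.span_le.mpr Set.inter_subset_left)
  obtain ⟨s, hs, rfl⟩ := hU
  refine sSup_le fun W hW => (hs W hW).le_span_inter hS |>.trans ?_
  exact Submodule.span_mono (Set.inter_subset_inter_left _ (le_sSup hW))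

open scoped Classical in
lemma injOn_filter_mem_isSigmaSA {T : Finset V}
    (hT : IsAdditiveSpine R (T : Set V)) :
    Set.InjOn (fun U : Submodule R V => {x ∈ T | x ∈ U}) {U | IsSigmaSA U} := by
  have hcoe (U : Submodule R V) :
      (({x ∈ T | x ∈ U} : Finset V) : Set V) = (U : Set V) ∩ T := by
    ext x
    simp [and_comm]
  intro U hU U' hU' h
  rw [hU.eq_span_inter hT, hU'.eq_span_inter hT, ← hcoe, ← hcoe]
  exact congrArg (fun s : Finset V => Submodule.span R (s : Set V)) h

end

lemma Finset.le_card_of_strictMono_subset {α : Type*} {T : Finset α} {r : ℕ}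
    {c : Fin (r + 1) → Finset α} (hc : StrictMono c) (hcT : ∀ i, c i ⊆ T) : r ≤ T.card := by
  let cardOf (i : Fin (r + 1)) : Fin (T.card + 1) :=
    ⟨(c i).card, Nat.lt_succ_of_le (Finset.card_le_card (hcT i))⟩
  have hinj : Function.Injective cardOf := fun i j hij =>
    (Finset.card_strictMono.comp hc).injective (congrArg Fin.val hij)
  simpa using Fintype.card_le_of_injective cardOf hinj

theorem sigmaSA_finite_spine {R V : Type*} [Semiring R] [AddCommMonoid V] [Module R V]
    (T : Finset V) (hT : IsAdditiveSpine R (T : Set V)) :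
    (∀ U : Submodule R V, IsSigmaSA U → U = Submodule.span R ((U : Set V) ∩ (T : Set V))) ∧
    {U : Submodule R V | IsSigmaSA U}.Finite ∧
    {U : Submodule R V | IsSigmaSA U}.ncard ≤ 2 ^ T.card ∧
    (∀ (r : ℕ) (U : Fin (r + 1) → Submodule R V),
      (∀ i, IsSigmaSA (U i)) → StrictMono U → r ≤ T.card) := by
  classical
  set trace : Submodule R V → Finset V := fun U => {x ∈ T | x ∈ U}
  have hinj := injOn_filter_mem_isSigmaSA hT
  have hmaps : Set.MapsTo trace {U | IsSigmaSA U} (T.powerset : Set (Finset V)) :=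
    fun U _ => Finset.mem_coe.mpr (Finset.mem_powerset.mpr (Finset.filter_subset _ T))
  refine ⟨fun U hU => hU.eq_span_inter hT, ?_, ?_, fun r U hU hUmono => ?_⟩
  · exact Set.Finite.of_finite_image (T.powerset.finite_toSet.subset hmaps.image_subset) hinj
  · calc {U : Submodule R V | IsSigmaSA U}.ncard
        ≤ (T.powerset : Set (Finset V)).ncard :=
          Set.ncard_le_ncard_of_injOn trace hmaps hinj T.powerset.finite_toSet
      _ = 2 ^ T.card := by rw [Set.ncard_coe_finset, Finset.card_powerset]
  · have htrace_mono : Monotone trace := fun U U' hUU' =>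
      Finset.monotone_filter_right T fun _ _ hx => hUU' hx
    have hchain : StrictMono (trace ∘ U) :=
      (htrace_mono.comp hUmono.monotone).strictMono_of_injective
        fun i j hij => hUmono.injective (hinj (hU i) (hU j) hij)
    exact Finset.le_card_of_strictMono_subset hchain fun i => Finset.filter_subset _ T
end

section
/- Let R be a semiring with finite additive spine M, V an R-module, V₀ a submodule, and S a finite subset of V with V = V₀ + Σ^∞ RS. Fix an SA-submodule W₀ of V with W₀ ⊆ V₀. Then every chain W₀ ⊊ W₁ ⊊ ... ⊊ W_r of SA-submodules W_i of V satisfying W_i ∩ V₀ = W₀ has length r ≤ |M|·|S|. -/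
open Pointwise

theorem Monotone.le_card_of_forall_exists_mem_succ_notMem {α σ : Type*} [SetLike σ α]
    [Preorder σ] [IsConcreteLE σ α] {r : ℕ} {W : Fin (r + 1) → σ} (hW : Monotone W) (P : Finset α)
    (hP : ∀ i : Fin r, ∃ x ∈ P, x ∈ W i.succ ∧ x ∉ W i.castSucc) : r ≤ P.card := by
  choose x hxP hxW hxW' using hP
  have hinj : Function.Injective x := .of_lt_imp_ne fun i j hij hx =>
    hxW' j (SetLike.le_def.mp (hW (Fin.succ_le_castSucc_iff.mpr hij)) (hx ▸ hxW i))
  simpa using Finset.card_le_card_of_injOn (s := .univ) x (fun i _ => hxP i) hinj.injOn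

section
variable {R V : Type*} [Semiring R] [AddCommMonoid V] [Module R V]

theorem IsAdditiveSpine.span_toAddSubmonoid_eq_closure {A : Set R} (hA : IsAdditiveSpine R A)
    (B : Set V) :
    (Submodule.span R B).toAddSubmonoid = AddSubmonoid.closure (halo R A • B) := by
  rw [Submodule.span_eq_closure]
  refine le_antisymm (AddSubmonoid.closure_le.mpr ?_)
    (AddSubmonoid.closure_mono (Set.smul_subset_smul_right (Set.subset_univ _)))
  rintro _ ⟨r, -, b, hb, rfl⟩
  have hr : r • b ∈ (AddSubmonoid.closure (halo R A)).map (smulAddHom R V |>.flip b) :=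
    ⟨r, hA ▸ trivial, rfl⟩
  rw [AddMonoidHom.map_mclosure] at hr
  refine AddSubmonoid.closure_mono ?_ hr
  rintro _ ⟨h, hh, rfl⟩
  exact Set.smul_mem_smul hh hb

theorem IsSA.exists_mem_notMem_of_mem_closure {W W' : Submodule R V} (hW : IsSA W) {G : Set V}
    {c : V} (hc : c ∈ AddSubmonoid.closure G) (hcW : c ∈ W) (hcW' : c ∉ W') :
    ∃ g ∈ G, g ∈ W ∧ g ∉ W' := by
  induction hc using AddSubmonoid.closure_induction with
  | mem g hg => exact ⟨g, hg, hcW, hcW'⟩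
  | zero => exact absurd (zero_mem W') hcW'
  | add a b _ _ iha ihb =>
    obtain ⟨haW, hbW⟩ := hW a b hcW
    by_cases haW' : a ∈ W'
    · exact ihb hbW fun hbW' => hcW' (add_mem haW' hbW')
    · exact iha haW haW'

theorem exists_smul_mem_notMem_of_mem_halo {A : Set R} {h : R} (hh : h ∈ halo R A)
    {W W' : Submodule R V} {s : V} (hW : h • s ∈ W) (hW' : h • s ∉ W') :
    ∃ a ∈ A, a • s ∈ W ∧ a • s ∉ W' := by
  obtain ⟨l, m, hl, hm⟩ := hh
  refine ⟨l • h, hl, ?_, fun ha => hW' ?_⟩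
  · rw [smul_assoc]
    exact W.smul_mem l hW
  · rw [← hm, smul_assoc]
    exact W'.smul_mem m ha

theorem IsAdditiveSpine.exists_smul_mem_notMem_of_lt {A : Set R} (hA : IsAdditiveSpine R A)
    {V₀ : Submodule R V} {B : Set V} (hgen : V₀ ⊔ Submodule.span R B = ⊤)
    {W W' : Submodule R V} (hlt : W < W') (hW' : IsSA W') (hV₀ : W' ⊓ V₀ ≤ W) :
    ∃ a ∈ A, ∃ s ∈ B, a • s ∈ W' ∧ a • s ∉ W := by
  obtain ⟨x, hxW', hxW⟩ := SetLike.exists_of_lt hlt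
  have hx : x ∈ V₀.toAddSubmonoid ⊔ AddSubmonoid.closure (halo R A • B) := by
    rw [← hA.span_toAddSubmonoid_eq_closure, ← Submodule.sup_toAddSubmonoid, hgen]
    trivial
  obtain ⟨v, hv, c, hc, rfl⟩ := AddSubmonoid.mem_sup.mp hx
  obtain ⟨hvW', hcW'⟩ := hW' v c hxW'
  have hcW : c ∉ W := fun hcW => hxW (add_mem (hV₀ ⟨hvW', hv⟩) hcW)
  obtain ⟨_, ⟨h, hh, s, hs, rfl⟩, hhW', hhW⟩ := hW'.exists_mem_notMem_of_mem_closure hc hcW' hcW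
  obtain ⟨a, ha, haW', haW⟩ := exists_smul_mem_notMem_of_mem_halo hh hhW' hhW
  exact ⟨a, ha, s, hs, haW', haW⟩

end

theorem chain_bound_over_V0_general {R V : Type*} [Semiring R] [AddCommMonoid V] [Module R V]
    (M : Finset R) (hM : IsAdditiveSpine R (M : Set R))
    (V₀ : Submodule R V) (S : Finset V)
    (hgen : V₀ ⊔ Submodule.span R (S : Set V) = ⊤)
    (W₀ : Submodule R V)
    (r : ℕ) (W : Fin (r + 1) → Submodule R V)
    (hmono : StrictMono W)
    (hSA : ∀ i, IsSA (W i)) (hinf : ∀ i, W i ⊓ V₀ = W₀) :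
    r ≤ M.card * S.card := by
  classical
  refine le_trans ?_ Finset.card_smul_le
  refine hmono.monotone.le_card_of_forall_exists_mem_succ_notMem (M • S) fun i => ?_
  have hV₀ : W i.succ ⊓ V₀ ≤ W i.castSucc := by
    rw [hinf, ← hinf i.castSucc]
    exact inf_le_left
  obtain ⟨a, ha, s, hs, hmem, hnotMem⟩ :=
    hM.exists_smul_mem_notMem_of_lt hgen (hmono Fin.castSucc_lt_succ) (hSA i.succ) hV₀
  exact ⟨a • s, Finset.smul_mem_smul ha hs, hmem, hnotMem⟩

theorem chain_bound_over_V0 {R V : Type*} [Semiring R] [AddCommMonoid V] [Module R V]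
    (M : Finset R) (hM : IsAdditiveSpine R (M : Set R))
    (V₀ : Submodule R V) (S : Finset V)
    (hgen : V₀ ⊔ Submodule.span R (S : Set V) = ⊤)
    (W₀ : Submodule R V) (hW₀ : IsSA W₀) (hW₀le : W₀ ≤ V₀)
    (r : ℕ) (W : Fin (r + 1) → Submodule R V)
    (hfirst : W 0 = W₀) (hmono : StrictMono W)
    (hSA : ∀ i, IsSA (W i)) (hinf : ∀ i, W i ⊓ V₀ = W₀) :
    r ≤ M.card * S.card :=
  chain_bound_over_V0_general M hM V₀ S hgen W₀ r W hmono hSA hinf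
end
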